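/- Let d ≥ 1, and let (k_j), k_∞, (σ_j), σ_∞ be as follows: the multi-indices k_j, k_∞ : {1,…,d} → ℕ (0 encoding ∞) satisfy, for each i, that k_j(i) = k_∞(i) for all sufficiently large j when k_∞(i) ≥ 1, and that k_j(i) is eventually 0 or larger than any given bound when k_∞(i) = 0; the skew bicharacters σ_j, σ_∞ of ℤ^d satisfy σ_j(h,y) = 1 for h ∈ H_{k_j} (similarly for σ_∞ and H_{k_∞}) and σ_j → σ_∞ pointwise. Then for every f ∈ ℓ¹(ℤ^d) and every compact operator A on ℓ²(ℤ^d), the operator norm ‖(T_{k_j,σ_j,f} − T_{k_∞,σ_∞,f}) ∘ A‖ converges to 0 as j → ∞. -/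

import Mathlib

/-!
Each `S_{k,σ,m}` sends the basis vectors `e_r` to unimodular multiples of pairwise distinct basis
vectors (`r ↦ ⌊r - m⌋_k + [r]_k` is injective), so `‖S_{k,σ,m}‖ ≤ 1` and `‖T_{k,σ,f}‖ ≤ ‖f‖₁`
uniformly in `j`. For fixed `r` and `m`, the floor maps of `k_j` eventually agree with that of
`k_∞` at `r` and `r - m`, so `S_{k_j,σ_j,m} e_r → S_{k_∞,σ_∞,m} e_r`, and dominated convergence
over `m` gives `T_j e_r → T_∞ e_r`. The uniform bound turns this into strong convergence on all of
`ℓ²(ℤ^d)`; by equicontinuity it is uniform on the compact closure of `A` applied to the unit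
ball, which is the claimed norm convergence.
-/

noncomputable section

open Filter

/-- `ℤ^d`. -/
abbrev Zd (d : ℕ) := Fin d → ℤ

/-- `ℓ²(ℤ^d)` with complex coefficients. -/
abbrev Hilb (d : ℕ) := lp (fun _ : Zd d => ℂ) 2

/-- `ℓ¹(ℤ^d)` with complex coefficients. -/
abbrev L1 (d : ℕ) := lp (fun _ : Zd d => ℂ) 1

/-- The canonical Hilbert basis vector `e_n` of `ℓ²(ℤ^d)`. -/
def eVec (d : ℕ) (n : Zd d) : Hilb d := lp.single 2 n 1

/-- A skew bicharacter of `ℤ^d`. -/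
def IsSkewBichar (d : ℕ) (σ : Zd d → Zd d → ℂ) : Prop :=
  (∀ x y, ‖σ x y‖ = 1) ∧
  (∀ x x' y, σ (x + x') y = σ x y * σ x' y) ∧
  (∀ x y y', σ x (y + y') = σ x y * σ x y') ∧
  (∀ x y, σ y x = starRingEnd ℂ (σ x y)) ∧
  (∀ x, σ x x = 1)

/-- `H_k = k ℤ^d`, with the convention that `k i = 0` encodes `∞` (so `∞ℤ = {0}`). -/
def Hset (d : ℕ) (k : Fin d → ℕ) : Set (Zd d) :=
  {x | ∀ i, (k i : ℤ) ∣ x i}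

/-- The centered fundamental domain `I_k` (no constraint on a coordinate when `k i = 0`). -/
def Iset (d : ℕ) (k : Fin d → ℕ) : Set (Zd d) :=
  {x | ∀ i, k i = 0 ∨
    (Int.fdiv (1 - (k i : ℤ)) 2 ≤ x i ∧ x i ≤ Int.fdiv ((k i : ℤ) - 1) 2)}

/-- Convergence of the multi-indices `k_j` to `k_∞` in `(ℕ∗ ∪ {∞})^d`, where `0` encodes
`∞`: coordinates with finite limit are eventually constant, and coordinates with limit
`∞` are eventually `∞` or larger than any given bound. -/
def MultiIndexTendsto (d : ℕ) (k : ℕ → Fin d → ℕ) (kinf : Fin d → ℕ) : Prop :=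
  (∀ i, 1 ≤ kinf i → ∀ᶠ j in atTop, k j i = kinf i) ∧
  (∀ i, kinf i = 0 → ∀ B : ℕ, ∀ᶠ j in atTop, k j i = 0 ∨ B < k j i)

open Topology

theorem Equicontinuous.tendstoUniformlyOn_of_tendsto {ι X α : Type*} [TopologicalSpace X]
    [UniformSpace α] {F : ι → X → α} {f : X → α} {l : Filter ι} (hF : Equicontinuous F)
    {K : Set X} (hK : IsCompact K) (h : ∀ x ∈ K, Tendsto (F · x) l (𝓝 (f x))) :
    TendstoUniformlyOn F f l K := by
  have huniform := (EquicontinuousOn.tendsto_uniformOnFun_iff_pi' (𝔖 := {K})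
    (by simpa using hK) (by simpa using hF.equicontinuousOn K) l f).2
  rw [UniformOnFun.tendsto_iff_tendstoUniformlyOn] at huniform
  exact huniform (tendsto_pi_nhds.2 fun x => h x (by simpa using x.2)) K rfl

theorem norm_le_of_hasSum_smul {𝕜 ι E : Type*} [NormedField 𝕜] [SeminormedAddCommGroup E]
    [NormedSpace 𝕜 E] {c : ι → 𝕜} {S : ι → E} {N : ℝ} {T : E} (hc : HasSum (‖c ·‖) N)
    (hS : ∀ i, ‖S i‖ ≤ 1) (hT : HasSum (fun i => c i • S i) T) : ‖T‖ ≤ N :=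
  hT.norm_le_of_bounded hc fun i =>
    (norm_smul_le _ _).trans (mul_le_of_le_one_right (norm_nonneg _) (hS i))

section Operators

variable {𝕜 α E F : Type*} [NontriviallyNormedField 𝕜] [NormedAddCommGroup E] [NormedSpace 𝕜 E]
  [NormedAddCommGroup F] [NormedSpace 𝕜 F] {l : Filter α}

theorem ContinuousLinearMap.equicontinuous_of_norm_le {B : α → E →L[𝕜] F} {C : ℝ}
    (hB : ∀ a, ‖B a‖ ≤ C) : Equicontinuous fun a => ⇑(B a) :=
  (LipschitzWith.uniformEquicontinuous _ C.toNNReal fun a =>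
    lipschitzWith_of_opNorm_le ((hB a).trans C.le_coe_toNNReal)).equicontinuous

theorem tendsto_apply_of_dense_span {B : α → E →L[𝕜] F} {Blim : E →L[𝕜] F} {C : ℝ}
    (hB : ∀ a, ‖B a‖ ≤ C) {s : Set E} (hs : (Submodule.span 𝕜 s).topologicalClosure = ⊤)
    (h : ∀ x ∈ s, Tendsto (fun a => B a x) l (𝓝 (Blim x))) (x : E) :
    Tendsto (fun a => B a x) l (𝓝 (Blim x)) := by
  let P : Submodule 𝕜 E :=
    { carrier := {x | Tendsto (fun a => B a x) l (𝓝 (Blim x))}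
      add_mem' := fun hx hy => by simpa using hx.add hy
      zero_mem' := by simpa using tendsto_const_nhds
      smul_mem' := fun c _ hx => by simpa using hx.const_smul c }
  have hP : IsClosed (P : Set E) :=
    (ContinuousLinearMap.equicontinuous_of_norm_le hB).isClosed_setOfPred_tendsto
      Blim.continuous
  have hspan := Submodule.topologicalClosure_minimal _ ((Submodule.span_le (p := P)).2 h) hP
  rw [hs] at hspan
  exact hspan Submodule.mem_top

theorem tendsto_apply_of_hasSum_smul {ι : Type*} [CompleteSpace F] {c : ι → 𝕜}
    {S : α → ι → E →L[𝕜] F} {Slim : ι → E →L[𝕜] F} {T : α → E →L[𝕜] F} {Tlim : E →L[𝕜] F}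
    (hc : Summable (‖c ·‖)) (hS : ∀ a i, ‖S a i‖ ≤ 1)
    (hT : ∀ a, HasSum (fun i => c i • S a i) (T a)) (hTlim : HasSum (fun i => c i • Slim i) Tlim)
    {x : E} (hx : ∀ i, Tendsto (fun a => S a i x) l (𝓝 (Slim i x))) :
    Tendsto (fun a => T a x) l (𝓝 (Tlim x)) := by
  have hsum : ∀ {R : ι → E →L[𝕜] F} {U : E →L[𝕜] F}, HasSum (fun i => c i • R i) U →
      U x = ∑' i, c i • R i x := fun hU => by
    simpa using ((hU.mapL (ContinuousLinearMap.apply 𝕜 F x)).tsum_eq).symm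
  simp only [hsum (hT _), hsum hTlim]
  refine tendsto_tsum_of_dominated_convergence (hc.mul_right ‖x‖)
    (fun i => (hx i).const_smul (c i)) (Eventually.of_forall fun a i => ?_)
  rw [norm_smul]
  gcongr
  exact (S a i).le_of_opNorm_le (hS a i) x |>.trans_eq (one_mul _)

theorem tendsto_opNorm_comp_of_isCompactOperator [NormedAlgebra ℝ 𝕜] {G : Type*}
    [NormedAddCommGroup G] [NormedSpace 𝕜 G] {B : α → F →L[𝕜] G} {C : ℝ} (hB : ∀ a, ‖B a‖ ≤ C)
    (h : ∀ y, Tendsto (fun a => B a y) l (𝓝 0)) {A : E →L[𝕜] F} (hA : IsCompactOperator A) :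
    Tendsto (fun a => ‖(B a).comp A‖) l (𝓝 0) := by
  set K := closure (A '' Metric.closedBall 0 1)
  have hunif : TendstoUniformlyOn (fun a => ⇑(B a)) 0 l K :=
    (ContinuousLinearMap.equicontinuous_of_norm_le hB).tendstoUniformlyOn_of_tendsto
      (hA.isCompact_closure_image_closedBall 1) fun y _ => h y
  rw [Metric.tendsto_nhds]
  intro ε hε
  filter_upwards [Metric.tendstoUniformlyOn_iff.1 hunif (ε / 2) (half_pos hε)] with a ha
  have hle : ‖(B a).comp A‖ ≤ ε / 2 := by
    refine ContinuousLinearMap.opNorm_le_of_unit_norm (half_pos hε).le fun x hx => ?_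
    have hxK : A x ∈ K := subset_closure ⟨x, by simp [hx], rfl⟩
    simpa using (ha (A x) hxK).le
  rw [Real.dist_eq, sub_zero, abs_norm]
  linarith

end Operators

section Hilbert

variable {𝕜 E F ι : Type*} [RCLike 𝕜] [NormedAddCommGroup E] [InnerProductSpace 𝕜 E]
  [NormedAddCommGroup F] [InnerProductSpace 𝕜 F]

theorem Orthonormal.smul_of_norm_eq_one {v : ι → E} (hv : Orthonormal 𝕜 v) {u : ι → 𝕜}
    (hu : ∀ i, ‖u i‖ = 1) : Orthonormal 𝕜 fun i => u i • v i := by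
  classical
  rw [orthonormal_iff_ite] at hv ⊢
  intro i j
  rw [inner_smul_left, inner_smul_right, hv]
  split_ifs with hij
  · subst hij
    rw [mul_one, RCLike.conj_mul, hu, RCLike.ofReal_one, one_pow]
  · simp

theorem HilbertBasis.norm_map_of_orthonormal [CompleteSpace F] (b : HilbertBasis ι 𝕜 E)
    {T : E →L[𝕜] F} (hT : Orthonormal 𝕜 (T ∘ b)) (x : E) : ‖T x‖ = ‖x‖ := by
  have hTx : HasSum (fun i => b.repr x i • T (b i)) (T x) := by
    simpa using (b.hasSum_repr x).mapL T
  have hiso := hT.orthogonalFamily.hasSum_linearIsometry (b.repr x)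
  simp only [LinearIsometry.toSpanSingleton_apply, Function.comp_apply] at hiso
  rw [hTx.unique hiso, LinearIsometry.norm_map, b.repr.norm_map]

end Hilbert

section FundamentalDomain

variable {d : ℕ}

def Hsubgroup (d : ℕ) (k : Fin d → ℕ) : AddSubgroup (Zd d) where
  carrier := Hset d k
  zero_mem' _ := dvd_zero _
  add_mem' ha hb i := (ha i).add (hb i)
  neg_mem' ha i := (ha i).neg_right

theorem Int.eq_of_dvd_sub_of_centered {K : ℕ} {a b : ℤ}
    (ha : K = 0 ∨ (Int.fdiv (1 - (K : ℤ)) 2 ≤ a ∧ a ≤ Int.fdiv ((K : ℤ) - 1) 2))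
    (hb : K = 0 ∨ (Int.fdiv (1 - (K : ℤ)) 2 ≤ b ∧ b ≤ Int.fdiv ((K : ℤ) - 1) 2))
    (hab : (K : ℤ) ∣ a - b) : a = b := by
  rcases ha with rfl | ha
  · simpa [sub_eq_zero] using hab
  rcases hb with rfl | hb
  · simpa [sub_eq_zero] using hab
  simp only [Int.fdiv_eq_ediv_of_nonneg _ zero_le_two] at ha hb
  exact sub_eq_zero.1 (Int.eq_zero_of_abs_lt_dvd hab (abs_lt.2 ⟨by omega, by omega⟩))

theorem Int.centered_of_two_natAbs_lt {K : ℕ} {a : ℤ} (h : 2 * a.natAbs < K) :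
    Int.fdiv (1 - (K : ℤ)) 2 ≤ a ∧ a ≤ Int.fdiv ((K : ℤ) - 1) 2 := by
  simp only [Int.fdiv_eq_ediv_of_nonneg _ zero_le_two]
  omega

theorem eq_of_mem_Iset_of_sub_mem_Hset {k : Fin d → ℕ} {a b : Zd d} (ha : a ∈ Iset d k)
    (hb : b ∈ Iset d k) (hab : a - b ∈ Hset d k) : a = b :=
  funext fun i => Int.eq_of_dvd_sub_of_centered (ha i) (hb i) (hab i)

/-- `ρ` is `n ↦ ⌊n⌋_k`, so that `n - ρ n = [n]_k`. -/
def IsFloorMap (d : ℕ) (k : Fin d → ℕ) (ρ : Zd d → Zd d) : Prop :=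
  ∀ n, ρ n ∈ Iset d k ∧ n - ρ n ∈ Hset d k

/-- The index map `r ↦ ⌊r - m⌋_k + [r]_k` of `S_{k,σ,m}`. -/
def floorShift (ρ : Zd d → Zd d) (m r : Zd d) : Zd d := ρ (r - m) + (r - ρ r)

namespace IsFloorMap

variable {k : Fin d → ℕ} {ρ : Zd d → Zd d}

theorem apply_eq (hρ : IsFloorMap d k ρ) {n b : Zd d} (hb : b ∈ Iset d k)
    (hnb : n - b ∈ Hset d k) : ρ n = b := by
  refine eq_of_mem_Iset_of_sub_mem_Hset (hρ n).1 hb ?_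
  rw [← sub_sub_sub_cancel_left _ _ n]
  exact (Hsubgroup d k).sub_mem hnb (hρ n).2

theorem apply_eq_apply (hρ : IsFloorMap d k ρ) {n n' : Zd d} (h : n - n' ∈ Hset d k) :
    ρ n = ρ n' := by
  refine hρ.apply_eq (hρ n').1 ?_
  rw [← sub_add_sub_cancel _ n']
  exact (Hsubgroup d k).add_mem h (hρ n').2

theorem floorShift_injective (hρ : IsFloorMap d k ρ) (m : Zd d) :
    Function.Injective (floorShift ρ m) := by
  have hfloor : ∀ r, ρ (floorShift ρ m r) = ρ (r - m) := fun r =>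
    hρ.apply_eq (hρ (r - m)).1 (by simpa [floorShift] using (hρ r).2)
  intro r r' h
  have hshift : ρ (r - m) = ρ (r' - m) := by rw [← hfloor, h, hfloor]
  have hfrac : r - ρ r = r' - ρ r' := by
    simpa [floorShift, hshift] using h
  have hrr' : r - r' ∈ Hset d k := by
    have := (Hsubgroup d k).sub_mem (hρ (r - m)).2 (hρ (r' - m)).2
    rwa [hshift, sub_sub_sub_cancel_right, sub_sub_sub_cancel_right] at this
  rw [← sub_add_cancel r (ρ r), hfrac, hρ.apply_eq_apply hrr', sub_add_cancel]

end IsFloorMap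

namespace MultiIndexTendsto

variable {k : ℕ → Fin d → ℕ} {kinf : Fin d → ℕ}

theorem eventually_mem_Iset (hk : MultiIndexTendsto d k kinf) {b : Zd d}
    (hb : b ∈ Iset d kinf) : ∀ᶠ j in atTop, b ∈ Iset d (k j) := by
  refine eventually_all.2 fun i => ?_
  rcases Nat.eq_zero_or_pos (kinf i) with hi | hi
  · filter_upwards [hk.2 i hi (2 * (b i).natAbs)] with j hj
    exact hj.imp_right Int.centered_of_two_natAbs_lt
  · filter_upwards [hk.1 i hi] with j hj
    rw [hj]; exact hb i

theorem eventually_mem_Hset (hk : MultiIndexTendsto d k kinf) {h : Zd d}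
    (hh : h ∈ Hset d kinf) : ∀ᶠ j in atTop, h ∈ Hset d (k j) := by
  refine eventually_all.2 fun i => ?_
  rcases Nat.eq_zero_or_pos (kinf i) with hi | hi
  · have : h i = 0 := by simpa [hi] using hh i
    exact Eventually.of_forall fun j => by simp [this]
  · filter_upwards [hk.1 i hi] with j hj
    rw [hj]; exact hh i

end MultiIndexTendsto

theorem IsFloorMap.eventually_eq {k : ℕ → Fin d → ℕ} {kinf : Fin d → ℕ} {r : ℕ → Zd d → Zd d}
    {rinf : Zd d → Zd d} (hk : MultiIndexTendsto d k kinf) (hr : ∀ j, IsFloorMap d (k j) (r j))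
    (hrinf : IsFloorMap d kinf rinf) (n : Zd d) : ∀ᶠ j in atTop, r j n = rinf n := by
  filter_upwards [hk.eventually_mem_Iset (hrinf n).1, hk.eventually_mem_Hset (hrinf n).2]
    with j hI hH
  exact (hr j).apply_eq hI hH

end FundamentalDomain

section SequenceSpace

variable {d : ℕ}

def eBasis (d : ℕ) : HilbertBasis (Zd d) ℂ (Hilb d) :=
  HilbertBasis.ofRepr (LinearIsometryEquiv.refl ℂ _)

theorem coe_eBasis : ⇑(eBasis d) = eVec d := by
  classical
  funext n
  rw [← (eBasis d).repr_symm_single]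
  rfl

theorem norm_le_one_of_apply_eVec {S : Hilb d →L[ℂ] Hilb d} {u : Zd d → ℂ} {φ : Zd d → Zd d}
    (hu : ∀ n, ‖u n‖ = 1) (hφ : φ.Injective) (hS : ∀ n, S (eVec d n) = u n • eVec d (φ n)) :
    ‖S‖ ≤ 1 := by
  have hortho : Orthonormal ℂ (S ∘ eBasis d) := by
    convert ((eBasis d).orthonormal.comp φ hφ).smul_of_norm_eq_one hu using 1
    funext n
    simp [coe_eBasis, hS]
  exact S.opNorm_le_bound zero_le_one fun ψ => by
    rw [(eBasis d).norm_map_of_orthonormal hortho, one_mul]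

end SequenceSpace

theorem stmt12_general (d : ℕ)
    (k : ℕ → Fin d → ℕ) (kinf : Fin d → ℕ)
    (hk : MultiIndexTendsto d k kinf)
    (σ : ℕ → Zd d → Zd d → ℂ) (σinf : Zd d → Zd d → ℂ)
    (hσ : ∀ j, IsSkewBichar d (σ j)) (hσinf : IsSkewBichar d σinf)
    (hσconv : ∀ x y : Zd d, Tendsto (fun j => σ j x y) atTop (nhds (σinf x y)))
    (r : ℕ → Zd d → Zd d) (rinf : Zd d → Zd d)
    (hr : ∀ j, ∀ n : Zd d, r j n ∈ Iset d (k j) ∧ n - r j n ∈ Hset d (k j))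
    (hrinf : ∀ n : Zd d, rinf n ∈ Iset d kinf ∧ n - rinf n ∈ Hset d kinf)
    (S : ℕ → Zd d → (Hilb d →L[ℂ] Hilb d)) (Sinf : Zd d → (Hilb d →L[ℂ] Hilb d))
    (hS : ∀ j, ∀ m x : Zd d,
      S j m (eVec d x) = σ j x m • eVec d (r j (x - m) + (x - r j x)))
    (hSinf : ∀ m x : Zd d,
      Sinf m (eVec d x) = σinf x m • eVec d (rinf (x - m) + (x - rinf x)))
    (f : L1 d)
    (T : ℕ → (Hilb d →L[ℂ] Hilb d)) (Tinf : Hilb d →L[ℂ] Hilb d)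
    (hT : ∀ j, HasSum (fun m : Zd d => f m • S j m) (T j))
    (hTinf : HasSum (fun m : Zd d => f m • Sinf m) Tinf) :
    ∀ A : Hilb d →L[ℂ] Hilb d, IsCompactOperator (⇑A) →
      Tendsto (fun j => ‖(T j - Tinf).comp A‖) atTop (nhds 0) := by
  intro A hA
  have hf : HasSum (‖f ·‖) ‖f‖ := by simpa using lp.hasSum_norm (p := 1) (by simp) f
  have hS1 : ∀ j m, ‖S j m‖ ≤ 1 := fun j m => norm_le_one_of_apply_eVec (fun x => (hσ j).1 x m)
    (IsFloorMap.floorShift_injective (hr j) m) (hS j m)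
  have hSinf1 : ∀ m, ‖Sinf m‖ ≤ 1 := fun m => norm_le_one_of_apply_eVec (fun x => hσinf.1 x m)
    (IsFloorMap.floorShift_injective hrinf m) (hSinf m)
  have hSconv : ∀ m x, Tendsto (fun j => S j m (eVec d x)) atTop (𝓝 (Sinf m (eVec d x))) := by
    intro m x
    rw [hSinf]
    refine ((hσconv x m).smul_const _).congr' ?_
    filter_upwards [IsFloorMap.eventually_eq hk hr hrinf (x - m),
      IsFloorMap.eventually_eq hk hr hrinf x] with j h1 h2
    rw [hS, h1, h2]
  have hTbasis : ∀ x, Tendsto (fun j => T j (eVec d x)) atTop (𝓝 (Tinf (eVec d x))) := fun x =>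
    tendsto_apply_of_hasSum_smul hf.summable hS1 hT hTinf (hSconv · x)
  have hTconv : ∀ ψ, Tendsto (fun j => (T j - Tinf) ψ) atTop (𝓝 0) := by
    intro ψ
    refine tendsto_sub_nhds_zero_iff.2 (tendsto_apply_of_dense_span
      (fun j => norm_le_of_hasSum_smul hf (hS1 j) (hT j)) (eBasis d).dense_span ?_ ψ)
    rintro _ ⟨x, rfl⟩
    rw [coe_eBasis]
    exact hTbasis x
  have hbound : ∀ j, ‖T j - Tinf‖ ≤ ‖f‖ + ‖f‖ := fun j =>
    norm_sub_le_of_le (norm_le_of_hasSum_smul hf (hS1 j) (hT j))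
      (norm_le_of_hasSum_smul hf hSinf1 hTinf)
  exact tendsto_opNorm_comp_of_isCompactOperator hbound hTconv hA

/-- If `(k_j, σ_j) → (k_∞, σ_∞)` in `Ξ^d`, then for every `f ∈ ℓ¹(ℤ^d)` and every compact
operator `A` on `ℓ²(ℤ^d)`, the operator norms `‖(T_{k_j,σ_j,f} − T_{k_∞,σ_∞,f}) ∘ A‖`
converge to `0`. -/
theorem stmt12 (d : ℕ) (hd : 1 ≤ d)
    (k : ℕ → Fin d → ℕ) (kinf : Fin d → ℕ)
    (hk : MultiIndexTendsto d k kinf)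
    (σ : ℕ → Zd d → Zd d → ℂ) (σinf : Zd d → Zd d → ℂ)
    (hσ : ∀ j, IsSkewBichar d (σ j)) (hσinf : IsSkewBichar d σinf)
    (hσH : ∀ j, ∀ h ∈ Hset d (k j), ∀ y : Zd d, σ j h y = 1)
    (hσinfH : ∀ h ∈ Hset d kinf, ∀ y : Zd d, σinf h y = 1)
    (hσconv : ∀ x y : Zd d, Tendsto (fun j => σ j x y) atTop (nhds (σinf x y)))
    (r : ℕ → Zd d → Zd d) (rinf : Zd d → Zd d)
    (hr : ∀ j, ∀ n : Zd d, r j n ∈ Iset d (k j) ∧ n - r j n ∈ Hset d (k j))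
    (hrinf : ∀ n : Zd d, rinf n ∈ Iset d kinf ∧ n - rinf n ∈ Hset d kinf)
    (S : ℕ → Zd d → (Hilb d →L[ℂ] Hilb d)) (Sinf : Zd d → (Hilb d →L[ℂ] Hilb d))
    (hS : ∀ j, ∀ m x : Zd d,
      S j m (eVec d x) = σ j x m • eVec d (r j (x - m) + (x - r j x)))
    (hSinf : ∀ m x : Zd d,
      Sinf m (eVec d x) = σinf x m • eVec d (rinf (x - m) + (x - rinf x)))
    (f : L1 d)
    (T : ℕ → (Hilb d →L[ℂ] Hilb d)) (Tinf : Hilb d →L[ℂ] Hilb d)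
    (hT : ∀ j, HasSum (fun m : Zd d => f m • S j m) (T j))
    (hTinf : HasSum (fun m : Zd d => f m • Sinf m) Tinf) :
    ∀ A : Hilb d →L[ℂ] Hilb d, IsCompactOperator (⇑A) →
      Tendsto (fun j => ‖(T j - Tinf).comp A‖) atTop (nhds 0) :=
  stmt12_general d k kinf hk σ σinf hσ hσinf hσconv r rinf hr hrinf S Sinf hS hSinf f T Tinf hT
    hTinf
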